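/- Let f_c > 0, n ≥ 1, and let (x₁, y₁), …, (xₙ, yₙ) ∈ ℝ² be paired data samples. Write s^x_{ij} = sinc_{f_c}(x_i − x_j) and s^y_{ij} = sinc_{f_c}(y_i − y_j). Suppose a ∈ ℝⁿ has all entries nonzero and satisfies the two-dimensional BLML constraints Σ_{j=1}^n a_j s^x_{ij} s^y_{ij} = n / a_i for every i. Then the joint BLML estimator f̂_{XY}(x,y) = ((1/n) Σ_{i=1}^n a_i sinc_{f_c}(x − x_i) sinc_{f_c}(y − y_i))² is a probability density on ℝ²: ∫∫_{ℝ²} f̂_{XY}(x,y) dx dy = 1. -/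

import Mathlib

open MeasureTheory

/-- The band-limited sinc kernel with cutoff frequency `fc`. -/
noncomputable def sincF (fc : ℝ) (x : ℝ) : ℝ :=
  if x = 0 then fc else Real.sin (Real.pi * fc * x) / (Real.pi * x)

/-!
The translates `sincF c (· - u)` form a reproducing family:
`∫ sincF c (x - u) * sincF c (x - v) dx = sincF c (u - v)`. Indeed `sincF c (· - t)` is the
Fourier transform of `η ↦ 𝟙_[-c/2, c/2](η) e^{2πiηt}`, so `sincF c · sincF c (· - t)` is the
Fourier transform of the convolution `W` of this function with `𝟙_[-c/2, c/2]`; `W` is integrable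
and continuous, and Fourier inversion at `0` gives `∫ sincF c x * sincF c (x - t) dx = W 0 =
sincF c t`. By Fubini the separable kernels then satisfy the same identity on `ℝ²`, and expanding
the square turns the integral of the estimator into `n⁻² ∑ᵢ aᵢ ∑ⱼ aⱼ s^x_{ij} s^y_{ij}`, which the
constraints reduce to `n⁻² ∑ᵢ aᵢ (n / aᵢ) = 1`.
-/

open Real Set FourierTransform Convolution
open Complex (I)
open scoped Complex

theorem sincF_eq_mul_sinc (c x : ℝ) : sincF c x = c * sinc (π * c * x) := by
  rcases eq_or_ne x 0 with rfl | hx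
  · simp [sincF]
  rcases eq_or_ne c 0 with rfl | hc
  · simp [sincF, hx]
  rw [sincF, if_neg hx, sinc_of_ne_zero (by positivity)]
  field_simp

theorem sincF_neg (c x : ℝ) : sincF c (-x) = sincF c x := by
  simp only [sincF_eq_mul_sinc, mul_neg, sinc_neg]

theorem continuous_sincF (c : ℝ) : Continuous (sincF c) := by
  simp only [funext (sincF_eq_mul_sinc c)]
  fun_prop

theorem mul_sincF (c x : ℝ) : x * sincF c x = Real.sin (π * c * x) / π := by
  rcases eq_or_ne x 0 with rfl | hx
  · simp
  rw [sincF, if_neg hx]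
  field_simp

theorem sincF_sq_le (c x : ℝ) : sincF c x ^ 2 ≤ (c ^ 2 + π⁻¹ ^ 2) * (1 + x ^ 2)⁻¹ := by
  have h₁ : sincF c x ^ 2 ≤ c ^ 2 := by
    rw [sincF_eq_mul_sinc, mul_pow]
    exact mul_le_of_le_one_right (sq_nonneg c)
      ((sq_le_one_iff_abs_le_one _).2 (abs_sinc_le_one _))
  have h₂ : (x * sincF c x) ^ 2 ≤ π⁻¹ ^ 2 := by
    rw [mul_sincF, div_eq_mul_inv, mul_pow]
    exact mul_le_of_le_one_left (sq_nonneg _) (sin_sq_le_one _)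
  rw [← div_eq_mul_inv, le_div_iff₀ (by positivity)]
  nlinarith

theorem memLp_two_sincF_sub (c u : ℝ) : MemLp (fun x ↦ sincF c (x - u)) 2 := by
  have hmeas : AEStronglyMeasurable (fun x ↦ sincF c (x - u)) :=
    ((continuous_sincF c).comp (continuous_sub_right u)).aestronglyMeasurable
  refine (memLp_two_iff_integrable_sq hmeas).2 <| Integrable.mono'
    ((integrable_inv_one_add_sq.comp_sub_right u).const_mul (c ^ 2 + π⁻¹ ^ 2))
    (hmeas.pow 2) (ae_of_all _ fun x ↦ ?_)
  rw [Real.norm_of_nonneg (sq_nonneg _)]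
  exact sincF_sq_le c (x - u)

theorem integrable_sincF_sub_mul_sincF_sub (c u v : ℝ) :
    Integrable (fun x ↦ sincF c (x - u) * sincF c (x - v)) :=
  (memLp_two_sincF_sub c u).integrable_mul (memLp_two_sincF_sub c v)

theorem intervalIntegral_cexp_eq_sincF (c s : ℝ) :
    ∫ η in -(c / 2)..c / 2, cexp (2 * π * I * η * s) = sincF c s := by
  rcases eq_or_ne s 0 with rfl | hs
  · simp [sincF]
  have hk : 2 * π * s ≠ 0 := by positivity
  have key := intervalIntegral.integral_comp_mul_left (fun y : ℝ ↦ cexp (y * I)) hk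
    (a := -(c / 2)) (b := c / 2)
  rw [mul_neg, show 2 * π * s * (c / 2) = π * c * s by ring, integral_exp_mul_I_eq_sinc] at key
  simp only [Complex.ofReal_mul, Complex.ofReal_ofNat] at key
  rw [sincF_eq_mul_sinc]
  have hs' : (s : ℂ) ≠ 0 := by exact_mod_cast hs
  convert key using 1
  · congr 1 with η
    ring_nf
  · rw [Complex.real_smul]
    push_cast
    field_simp

noncomputable def bandCharacter (c t : ℝ) : ℝ → ℂ :=
  (Icc (-(c / 2)) (c / 2)).indicator fun η ↦ cexp (2 * π * I * η * t)

theorem integrable_bandCharacter (c t : ℝ) : Integrable (bandCharacter c t) :=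
  (integrable_indicator_iff measurableSet_Icc).2
    (Continuous.integrableOn_Icc (by fun_prop))

theorem integral_bandCharacter {c : ℝ} (hc : 0 ≤ c) (t : ℝ) :
    ∫ η, bandCharacter c t η = sincF c t := by
  rw [bandCharacter, integral_indicator measurableSet_Icc, integral_Icc_eq_integral_Ioc,
    ← intervalIntegral.integral_of_le (by linarith), intervalIntegral_cexp_eq_sincF]

theorem fourier_bandCharacter {c : ℝ} (hc : 0 ≤ c) (t x : ℝ) :
    𝓕 (bandCharacter c t) x = sincF c (x - t) := by
  have hmod : ∀ η,
      cexp (↑(-2 * π * η * x) * I) • bandCharacter c t η = bandCharacter c (t - x) η := by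
    intro η
    simp only [bandCharacter, indicator_apply]
    split_ifs
    · rw [smul_eq_mul, ← Complex.exp_add]
      push_cast
      ring_nf
    · exact smul_zero _
  rw [Real.fourier_real_eq_integral_exp_smul]
  simp only [hmod, integral_bandCharacter hc, ← sincF_neg c (x - t), neg_sub]

theorem bandCharacter_zero (c : ℝ) :
    bandCharacter c 0 = (Icc (-(c / 2)) (c / 2)).indicator 1 := by
  simp [bandCharacter, Pi.one_def]

theorem continuous_convolution_indicator_Icc {f : ℝ → ℂ} (hf : Integrable f) (a b : ℝ) :
    Continuous (f ⋆[ContinuousLinearMap.mul ℂ ℂ] (Icc a b).indicator 1) := by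
  rw [continuous_iff_continuousAt]
  intro x₀
  have hg : Measurable ((Icc a b).indicator (1 : ℝ → ℂ)) :=
    measurable_const.indicator measurableSet_Icc
  refine continuousAt_of_dominated (bound := fun t ↦ ‖f t‖)
    (Filter.Eventually.of_forall fun x ↦ hf.aestronglyMeasurable.mul
      (hg.comp (measurable_const.sub measurable_id)).aestronglyMeasurable)
    (Filter.Eventually.of_forall fun x ↦ ae_of_all _ fun t ↦ ?_) hf.norm ?_
  · simpa using mul_le_of_le_one_right (norm_nonneg (f t))
      ((norm_indicator_le_norm_self (1 : ℝ → ℂ) (x - t)).trans_eq norm_one)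
  · filter_upwards [volume.ae_ne (x₀ - a), volume.ae_ne (x₀ - b)] with t hta htb
    have hfr : x₀ - t ∉ frontier (Icc a b) := by
      rw [frontier, isClosed_Icc.closure_eq, interior_Icc]
      rintro ⟨⟨h₁, h₂⟩, hIoo⟩
      exact hIoo ⟨h₁.lt_of_ne (by grind), h₂.lt_of_ne (by grind)⟩
    have hind : ContinuousAt ((Icc a b).indicator (1 : ℝ → ℂ)) (x₀ - t) :=
      continuousOn_const.continuousAt_indicator hfr
    exact continuousAt_const.mul (hind.comp_of_eq (continuous_sub_right t).continuousAt rfl)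

theorem convolution_bandCharacter_zero_apply_zero {c : ℝ} (hc : 0 ≤ c) (t : ℝ) :
    (bandCharacter c t ⋆[ContinuousLinearMap.mul ℂ ℂ] bandCharacter c 0) 0 = sincF c t := by
  rw [convolution_def, bandCharacter_zero, ← integral_bandCharacter hc t]
  congr 1 with η
  by_cases hη : η ∈ Icc (-(c / 2)) (c / 2)
  · have hη' : 0 - η ∈ Icc (-(c / 2)) (c / 2) := ⟨by linarith [hη.2], by linarith [hη.1]⟩
    rw [ContinuousLinearMap.mul_apply', indicator_of_mem hη', Pi.one_apply, mul_one]
  · simp [bandCharacter, hη]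

theorem integral_sincF_mul_sincF_sub {c : ℝ} (hc : 0 ≤ c) (t : ℝ) :
    ∫ x, sincF c x * sincF c (x - t) = sincF c t := by
  set W := bandCharacter c t ⋆[ContinuousLinearMap.mul ℂ ℂ] bandCharacter c 0
  have hW : Integrable W :=
    (integrable_bandCharacter c t).integrable_convolution _ (integrable_bandCharacter c 0)
  have hW₀ : ContinuousAt W 0 := by
    simp only [W, bandCharacter_zero]
    exact (continuous_convolution_indicator_Icc (integrable_bandCharacter c t) _ _).continuousAt
  have hFW : 𝓕 W = fun x ↦ ((sincF c x * sincF c (x - t) : ℝ) : ℂ) := by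
    ext x
    rw [Real.fourier_mul_convolution_eq (integrable_bandCharacter c t)
      (integrable_bandCharacter c 0), fourier_bandCharacter hc, fourier_bandCharacter hc,
      sub_zero, mul_comm]
    push_cast
    rfl
  have hinv := hW.fourierInv_fourier_eq (by
    simpa [hFW] using (integrable_sincF_sub_mul_sincF_sub c 0 t).ofReal (𝕜 := ℂ)) hW₀
  rw [show W 0 = sincF c t from convolution_bandCharacter_zero_apply_zero hc t,
    Real.fourierInv_eq, hFW] at hinv
  simp only [inner_zero_right, AddChar.map_zero_eq_one, one_smul, integral_complex_ofReal] at hinv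
  exact_mod_cast hinv

theorem integral_sincF_sub_mul_sincF_sub {c : ℝ} (hc : 0 ≤ c) (u v : ℝ) :
    ∫ x, sincF c (x - u) * sincF c (x - v) = sincF c (u - v) := by
  have hshift :=
    integral_sub_right_eq_self (μ := volume) (fun x ↦ sincF c x * sincF c (x - (v - u))) u
  simp only [sub_sub, add_sub_cancel] at hshift
  rw [hshift, integral_sincF_mul_sincF_sub hc, ← sincF_neg, neg_sub]

theorem integrable_sincF_sub_mul_sincF_sub_prod (c u v u' v' : ℝ) :
    Integrable (fun p : ℝ × ℝ ↦
      sincF c (p.1 - u) * sincF c (p.2 - v) * (sincF c (p.1 - u') * sincF c (p.2 - v'))) := by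
  have h := (integrable_sincF_sub_mul_sincF_sub c u u').mul_prod
    (integrable_sincF_sub_mul_sincF_sub c v v')
  rw [← Measure.volume_eq_prod] at h
  exact h.congr (ae_of_all _ fun p ↦ by ring)

theorem integral_sincF_sub_mul_sincF_sub_prod {c : ℝ} (hc : 0 ≤ c) (u v u' v' : ℝ) :
    ∫ p : ℝ × ℝ,
        sincF c (p.1 - u) * sincF c (p.2 - v) * (sincF c (p.1 - u') * sincF c (p.2 - v'))
      = sincF c (u - u') * sincF c (v - v') := by
  rw [Measure.volume_eq_prod, ← integral_sincF_sub_mul_sincF_sub hc,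
    ← integral_sincF_sub_mul_sincF_sub hc, ← integral_prod_mul]
  congr 1 with p
  ring

theorem integral_sum_mul_sq {α ι : Type*} [MeasurableSpace α] {μ : Measure α} [Fintype ι]
    (a : ι → ℝ) {φ : ι → α → ℝ} (hφ : ∀ i j, Integrable (fun x ↦ φ i x * φ j x) μ) :
    ∫ x, (∑ i, a i * φ i x) ^ 2 ∂μ = ∑ i, ∑ j, a i * a j * ∫ x, φ i x * φ j x ∂μ := by
  have hexpand : ∀ x, (∑ i, a i * φ i x) ^ 2 = ∑ i, ∑ j, a i * a j * (φ i x * φ j x) := by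
    intro x
    rw [sq, Finset.sum_mul_sum]
    exact Finset.sum_congr rfl fun i _ ↦ Finset.sum_congr rfl fun j _ ↦ by ring
  simp_rw [hexpand, ← integral_const_mul]
  rw [integral_finsetSum _ fun i _ ↦ integrable_finsetSum _ fun j _ ↦ (hφ i j).const_mul _]
  exact Finset.sum_congr rfl fun i _ ↦ integral_finsetSum _ fun j _ ↦ (hφ i j).const_mul _

theorem sum_sum_mul_eq_card_sq {ι : Type*} [Fintype ι] {a : ι → ℝ} (ha : ∀ i, a i ≠ 0)
    {S : ι → ι → ℝ} (hS : ∀ i, ∑ j, a j * S i j = Fintype.card ι / a i) :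
    ∑ i, ∑ j, a i * a j * S i j = (Fintype.card ι : ℝ) ^ 2 := by
  simp_rw [mul_assoc, ← Finset.mul_sum, hS, mul_div_cancel₀ _ (ha _), Finset.sum_const,
    Finset.card_univ, nsmul_eq_mul, sq]

/-- If the coefficient vector `a` satisfies the two-dimensional BLML
constraints `Σⱼ aⱼ s^x_{ij} s^y_{ij} = n / aᵢ` for all `i`, then the joint
BLML estimator
`f̂_{XY}(x,y) = ((1/n) Σᵢ aᵢ sinc_{fc}(x − xᵢ) sinc_{fc}(y − yᵢ))²`
integrates to one, i.e. it is a probability density on `ℝ²`. -/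
theorem blml_joint_estimator_is_density
    (fc : ℝ) (hfc : 0 < fc) (n : ℕ) (hn : 1 ≤ n)
    (xs ys : Fin n → ℝ) (a : Fin n → ℝ) (ha : ∀ i, a i ≠ 0)
    (hconstraint : ∀ i,
      ∑ j, a j * (sincF fc (xs i - xs j) * sincF fc (ys i - ys j)) = n / a i) :
    ∫ p : ℝ × ℝ,
      ((1 / n : ℝ) * ∑ i, a i * sincF fc (p.1 - xs i) * sincF fc (p.2 - ys i)) ^ 2
      = 1 := by
  have hn₀ : (n : ℝ) ≠ 0 := Nat.cast_ne_zero.2 (by omega)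
  simp_rw [mul_pow, mul_assoc, integral_const_mul]
  rw [integral_sum_mul_sq a fun i j ↦ integrable_sincF_sub_mul_sincF_sub_prod fc _ _ _ _]
  simp_rw [integral_sincF_sub_mul_sincF_sub_prod hfc.le]
  rw [sum_sum_mul_eq_card_sq ha (by simpa using hconstraint), Fintype.card_fin]
  field_simp
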